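/- arXiv:2504.10413 — 4 statements merged into one kernel-verified Lean document; each statement's English description precedes it below -/
import Mathlib

section
/- Let h : [1,R] → (0,∞) be nondecreasing and right-continuous, let ν be its distributional derivative (a nonnegative measure on [1,R]). Then ∫_{[1,R]} s²/h(s)² dν(s) ≤ 2 ∫_1^R s/h(s) ds − R²/h(R) + 1/h(1). -/
/-
Write `s² = a² + ∫_a^s 2t dt` and swap the order of integration: everything reduces to the bound
`∫_{(x,y]} h⁻² dν ≤ 1/h(x) - 1/h(y)`. Pushed forward by `h`, the measure `ν` on `(x,y]` lies to
the right of Lebesgue measure on `(h x, h y]`: `ν {s ∈ (x,y] | h s ≤ u}` is at most the length of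
`(h x, min (h y) u]`, because a jump of `h` places its mass at the top of the gap it opens. Since
`v ↦ v⁻²` is decreasing, the layer-cake formula turns this into
`∫_{(x,y]} h⁻² dν ≤ ∫_{h x}^{h y} v⁻² dv = 1/h(x) - 1/h(y)`.
-/

open MeasureTheory Set Filter Topology
open scoped ENNReal

theorem lintegral_ofReal_le_of_meas_le {α β : Type*} [MeasurableSpace α] [MeasurableSpace β]
    {μ : Measure α} {ν : Measure β} {f : α → ℝ} {g : β → ℝ}
    (hf : 0 ≤ᵐ[μ] f) (hfm : AEMeasurable f μ) (hg : 0 ≤ᵐ[ν] g) (hgm : AEMeasurable g ν)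
    (hfg : ∀ t > 0, μ {a | t ≤ f a} ≤ ν {b | t ≤ g b}) :
    ∫⁻ a, ENNReal.ofReal (f a) ∂μ ≤ ∫⁻ b, ENNReal.ofReal (g b) ∂ν := by
  rw [lintegral_eq_lintegral_meas_le μ hf hfm, lintegral_eq_lintegral_meas_le ν hg hgm]
  exact setLIntegral_mono' measurableSet_Ioi hfg

theorem lintegral_Ioc_ofReal_inv_sq {a b : ℝ} (ha : 0 < a) (hab : a ≤ b) :
    ∫⁻ v in Ioc a b, ENNReal.ofReal (v ^ 2)⁻¹ = ENNReal.ofReal (a⁻¹ - b⁻¹) := by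
  have h0 : (0 : ℝ) ∉ uIcc a b := by
    rw [uIcc_of_le hab]
    exact fun h => (ha.trans_le h.1).false
  have hint : IntervalIntegrable (fun v : ℝ => (v ^ 2)⁻¹) volume a b :=
    ((continuousOn_id.pow 2).inv₀ fun v hv => pow_ne_zero 2 fun h => h0 (h ▸ hv)).intervalIntegrable
  rw [← ofReal_integral_eq_lintegral_ofReal
    ((intervalIntegrable_iff_integrableOn_Ioc_of_le hab).1 hint)
    (.of_forall fun v => by positivity), ← intervalIntegral.integral_of_le hab]
  congr 1
  simp_rw [← zpow_natCast, ← zpow_neg]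
  rw [integral_zpow (Or.inr ⟨by norm_num, h0⟩)]
  norm_num
  ring

theorem lintegral_Ioo_ofReal_two_mul {a s : ℝ} (ha : 0 ≤ a) (has : a ≤ s) :
    ∫⁻ t in Ioo a s, ENNReal.ofReal (2 * t) = ENNReal.ofReal (s ^ 2 - a ^ 2) := by
  rw [Measure.restrict_congr_set Ioo_ae_eq_Ioc, ← ofReal_integral_eq_lintegral_ofReal
    (f := fun t => 2 * t) (continuous_const.mul continuous_id).integrableOn_Ioc
    ((ae_restrict_iff' measurableSet_Ioc).2 (.of_forall fun t ht => by
      simp only [Pi.zero_apply]; linarith [ht.1])),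
    ← intervalIntegral.integral_of_le has, intervalIntegral.integral_const_mul, integral_id]
  ring_nf

theorem setLIntegral_ofReal_sq_sub_sq_mul {μ : Measure ℝ} [SFinite μ] {a b : ℝ} (ha : 0 ≤ a)
    {W : ℝ → ℝ≥0∞} (hW : Measurable W) :
    ∫⁻ s in Ioc a b, ENNReal.ofReal (s ^ 2 - a ^ 2) * W s ∂μ
      = ∫⁻ t in Ioc a b, ENNReal.ofReal (2 * t) * ∫⁻ s in Ioc t b, W s ∂μ := by
  set F : ℝ → ℝ → ℝ≥0∞ := fun s t => if t < s then ENNReal.ofReal (2 * t) * W s else 0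
  have hF : Measurable (Function.uncurry F) :=
    Measurable.ite (measurableSet_lt measurable_snd measurable_fst)
      ((measurable_snd.const_mul 2).ennreal_ofReal.mul (hW.comp measurable_fst)) measurable_const
  calc ∫⁻ s in Ioc a b, ENNReal.ofReal (s ^ 2 - a ^ 2) * W s ∂μ
      = ∫⁻ s in Ioc a b, (∫⁻ t in Ioc a b, F s t) ∂μ := by
        refine setLIntegral_congr_fun measurableSet_Ioc fun s hs => ?_
        have hset : Iio s ∩ Ioc a b = Ioo a s := by
          ext t
          simp only [mem_inter_iff, mem_Iio, mem_Ioc, mem_Ioo]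
          exact ⟨fun h => ⟨h.2.1, h.1⟩, fun h => ⟨h.2, h.1, h.2.le.trans hs.2⟩⟩
        have hrow : (fun t => F s t) = (Iio s).indicator fun t => ENNReal.ofReal (2 * t) * W s := by
          ext t
          simp only [F, indicator_apply, mem_Iio]
        rw [hrow, lintegral_indicator measurableSet_Iio,
          Measure.restrict_restrict measurableSet_Iio, hset,
          lintegral_mul_const (W s) (by fun_prop), lintegral_Ioo_ofReal_two_mul ha hs.1.le]
    _ = ∫⁻ t in Ioc a b, ∫⁻ s in Ioc a b, F s t ∂μ := lintegral_lintegral_swap hF.aemeasurable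
    _ = _ := by
        refine setLIntegral_congr_fun measurableSet_Ioc fun t ht => ?_
        have hcol : (fun s => F s t) = (Ioi t).indicator fun s => ENNReal.ofReal (2 * t) * W s := by
          ext s
          simp only [F, indicator_apply, mem_Ioi]
        rw [hcol, lintegral_indicator measurableSet_Ioi,
          Measure.restrict_restrict measurableSet_Ioi, inter_comm, Ioc_inter_Ioi,
          sup_eq_right.2 ht.1.le, lintegral_const_mul _ hW]

theorem le_inv_sq_iff_le_sqrt_inv {t a : ℝ} (ht : 0 < t) (ha : 0 < a) :
    t ≤ (a ^ 2)⁻¹ ↔ a ≤ √t⁻¹ := by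
  rw [le_inv_comm₀ ht (by positivity), Real.le_sqrt ha.le (by positivity)]

theorem integral_two_mul_mul_inv_sub_inv {g : ℝ → ℝ} {a b : ℝ}
    (hg : IntervalIntegrable (fun t => (g t)⁻¹) volume a b) :
    ∫ t in a..b, 2 * t * ((g t)⁻¹ - (g b)⁻¹)
      = 2 * (∫ t in a..b, t / g t) - (b ^ 2 - a ^ 2) / g b := by
  have hlin : IntervalIntegrable (fun t : ℝ => 2 * (g b)⁻¹ * t) volume a b :=
    (continuous_const.mul continuous_id).intervalIntegrable a b
  have hmul : IntervalIntegrable (fun t => t * (g t)⁻¹) volume a b :=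
    hg.continuousOn_mul continuousOn_id
  calc ∫ t in a..b, 2 * t * ((g t)⁻¹ - (g b)⁻¹)
      = ∫ t in a..b, (2 * (t * (g t)⁻¹) - 2 * (g b)⁻¹ * t) := by congr 1; ext t; ring
    _ = _ := by
      rw [intervalIntegral.integral_sub (hmul.const_mul 2) hlin,
        intervalIntegral.integral_const_mul, intervalIntegral.integral_const_mul, integral_id]
      simp only [div_eq_mul_inv]
      ring

namespace StieltjesFunction

theorem measure_Ioc_sublevel_le_volume (h : StieltjesFunction ℝ) (x y u : ℝ) :
    h.measure {s ∈ Ioc x y | h s ≤ u} ≤ volume {v ∈ Ioc (h x) (h y) | v ≤ u} := by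
  set S := {s ∈ Ioc x y | h s ≤ u}
  rcases S.eq_empty_or_nonempty with hS | ⟨s₀, hs₀⟩
  · simp [S, hS]
  suffices ∃ c, h.measure S ≤ ENNReal.ofReal (c - h x) ∧ c ≤ h y ∧ c ≤ u by
    obtain ⟨c, hSc, hcy, hcu⟩ := this
    calc h.measure S ≤ volume (Ioc (h x) c) := by rwa [Real.volume_Ioc]
      _ ≤ _ := measure_mono fun v hv => show v ∈ {v ∈ Ioc (h x) (h y) | v ≤ u} from
          ⟨⟨hv.1, hv.2.trans hcy⟩, hv.2.trans hcu⟩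
  have hbdd : BddAbove S := ⟨y, fun s hs => hs.1.2⟩
  set τ := sSup S
  have hle : ∀ s ∈ S, s ≤ τ := fun s hs => le_csSup hbdd hs
  by_cases hτ : τ ∈ S
  · refine ⟨h τ, ?_, h.mono hτ.1.2, hτ.2⟩
    rw [← h.measure_Ioc]
    exact measure_mono fun s hs => ⟨hs.1.1, hle s hs⟩
  · have hSτ : S ⊆ Ioo x τ := fun s hs =>
      ⟨hs.1.1, (hle s hs).lt_of_ne (by rintro rfl; exact hτ hs)⟩
    have hleft : ∀ s < τ, h s ≤ h y ∧ h s ≤ u := fun s hs => by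
      obtain ⟨s', hs', hss'⟩ := exists_lt_of_lt_csSup ⟨s₀, hs₀⟩ hs
      exact ⟨h.mono (hss'.le.trans hs'.1.2), (h.mono hss'.le).trans hs'.2⟩
    have hlim := h.mono.tendsto_leftLim τ
    refine ⟨Function.leftLim h τ, ?_, le_of_tendsto hlim ?_, le_of_tendsto hlim ?_⟩
    · rw [← h.measure_Ioo]
      exact measure_mono hSτ
    · exact eventually_nhdsWithin_of_forall fun s hs => (hleft s hs).1
    · exact eventually_nhdsWithin_of_forall fun s hs => (hleft s hs).2

theorem setLIntegral_inv_sq_le (h : StieltjesFunction ℝ) {x y : ℝ} (hx : 0 < h x) (hxy : x ≤ y) :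
    ∫⁻ s in Ioc x y, ENNReal.ofReal (h s ^ 2)⁻¹ ∂h.measure
      ≤ ENNReal.ofReal ((h x)⁻¹ - (h y)⁻¹) := by
  rw [← lintegral_Ioc_ofReal_inv_sq hx (h.mono hxy)]
  refine lintegral_ofReal_le_of_meas_le (.of_forall fun _ => by positivity)
    (h.mono.measurable.pow_const 2).inv.aemeasurable (.of_forall fun _ => by positivity)
    (measurable_id.pow_const 2).inv.aemeasurable fun t ht => ?_
  rw [Measure.restrict_apply' measurableSet_Ioc, Measure.restrict_apply' measurableSet_Ioc,
    inter_comm, inter_comm _ (Ioc _ _)]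
  convert h.measure_Ioc_sublevel_le_volume x y √t⁻¹ using 2 <;>
    refine Set.ext fun v => and_congr_right fun hv => ?_
  · exact le_inv_sq_iff_le_sqrt_inv ht (hx.trans_le (h.mono hv.1.le))
  · exact le_inv_sq_iff_le_sqrt_inv ht (hx.trans hv.1)

theorem setLIntegral_sq_div_sq_le (h : StieltjesFunction ℝ) {a b : ℝ} (ha : 0 ≤ a) (hab : a ≤ b)
    (hpos : 0 < h a) :
    ∫⁻ s in Ioc a b, ENNReal.ofReal (s ^ 2 / h s ^ 2) ∂h.measure
      ≤ ENNReal.ofReal (a ^ 2) * ENNReal.ofReal ((h a)⁻¹ - (h b)⁻¹)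
        + ∫⁻ t in Ioc a b, ENNReal.ofReal (2 * t * ((h t)⁻¹ - (h b)⁻¹)) := by
  set W : ℝ → ℝ≥0∞ := fun s => ENNReal.ofReal (h s ^ 2)⁻¹
  have hW : Measurable W := (h.mono.measurable.pow_const 2).inv.ennreal_ofReal
  have hsplit : ∀ s ∈ Ioc a b, ENNReal.ofReal (s ^ 2 / h s ^ 2)
      = ENNReal.ofReal (a ^ 2) * W s + ENNReal.ofReal (s ^ 2 - a ^ 2) * W s := by
    intro s hs
    rw [div_eq_mul_inv, ENNReal.ofReal_mul (sq_nonneg s), ← add_mul,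
      ← ENNReal.ofReal_add (sq_nonneg a) (by nlinarith [hs.1]), add_sub_cancel]
  rw [setLIntegral_congr_fun measurableSet_Ioc hsplit, lintegral_add_left (hW.const_mul _),
    lintegral_const_mul _ hW, setLIntegral_ofReal_sq_sub_sq_mul ha hW]
  refine add_le_add (by gcongr; exact h.setLIntegral_inv_sq_le hpos hab)
    (setLIntegral_mono' measurableSet_Ioc fun t ht => ?_)
  rw [ENNReal.ofReal_mul (p := 2 * t) (by linarith [ht.1])]
  gcongr
  exact h.setLIntegral_inv_sq_le (hpos.trans_le (h.mono ht.1.le)) ht.2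

end StieltjesFunction

/-- Let `h : [1,R] → (0,∞)` be nondecreasing and right-continuous (formalized as
a Stieltjes function, positive at `1`), and let `ν = h.measure` be its distributional
derivative, a nonnegative measure. Then
`∫_{(1,R]} s²/h(s)² dν(s) ≤ 2 ∫_1^R s/h(s) ds − R²/h(R) + 1/h(1)`. -/
theorem stmt_7 (R : ℝ) (hR : 1 ≤ R) (h : StieltjesFunction ℝ) (hpos : 0 < h 1) :
    ∫⁻ s in Set.Ioc (1:ℝ) R, ENNReal.ofReal (s ^ 2 / (h s) ^ 2) ∂h.measure
      ≤ ENNReal.ofReal (2 * (∫ s in (1:ℝ)..R, s / h s) - R ^ 2 / h R + 1 / h 1) := by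
  have hanti : AntitoneOn (fun t => (h t)⁻¹) (uIcc 1 R) := by
    rw [uIcc_of_le hR]
    exact fun s hs t _ hst => inv_anti₀ (hpos.trans_le (h.mono hs.1)) (h.mono hst)
  have hnn : ∀ t ∈ Ioc 1 R, 0 ≤ 2 * t * ((h t)⁻¹ - (h R)⁻¹) := fun t ht =>
    mul_nonneg (by linarith [ht.1])
      (sub_nonneg.2 (inv_anti₀ (hpos.trans_le (h.mono ht.1.le)) (h.mono ht.2)))
  have hint : IntegrableOn (fun t => 2 * t * ((h t)⁻¹ - (h R)⁻¹)) (Ioc 1 R) :=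
    (intervalIntegrable_iff_integrableOn_Ioc_of_le hR).1 <|
      (hanti.intervalIntegrable.sub intervalIntegrable_const).continuousOn_mul (by fun_prop)
  calc _ ≤ ENNReal.ofReal (1 ^ 2) * ENNReal.ofReal ((h 1)⁻¹ - (h R)⁻¹)
        + ∫⁻ t in Ioc 1 R, ENNReal.ofReal (2 * t * ((h t)⁻¹ - (h R)⁻¹)) :=
        h.setLIntegral_sq_div_sq_le zero_le_one hR hpos
    _ = ENNReal.ofReal ((h 1)⁻¹ - (h R)⁻¹ + ∫ t in (1 : ℝ)..R, 2 * t * ((h t)⁻¹ - (h R)⁻¹)) := by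
        rw [one_pow, ENNReal.ofReal_one, one_mul, intervalIntegral.integral_of_le hR,
          ← ofReal_integral_eq_lintegral_ofReal hint
            ((ae_restrict_iff' measurableSet_Ioc).2 (.of_forall hnn)),
          ← ENNReal.ofReal_add (sub_nonneg.2 (inv_anti₀ hpos (h.mono hR)))
            (setIntegral_nonneg measurableSet_Ioc hnn)]
    _ = _ := by
        rw [integral_two_mul_mul_inv_sub_inv hanti.intervalIntegrable]
        congr 1
        ring
end

section
/- Let f : ℝ² → (0,∞) be locally integrable, and suppose that for every ν ∈ S¹ and every line l parallel to ν, the restriction of f to l has the property that f^{1/(n−1)} is concave (for a fixed n ≥ 2). Suppose also f is continuous. If f is bounded above on two open balls B_r(x₀) and B_r(x₁) with values ≤ A on B_r(x₀) and ≥ i on B_r(x₁) on sets of positive measure, and both balls lie in a compact subset K of an open convex set U with dist(K,∂U) ≥ δ, then i is bounded by a constant depending only on A, r, δ, n and diam(K). -/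
open MeasureTheory Metric

/-!
Let `g = f ^ (1 / (n - 1))`, which is concave on every line inside `U`. Take `y₀ ∈ B_r(x₀)` with
`f y₀ ≤ A` and `y₁ ∈ B_r(x₁)` with `i ≤ f y₁`, and extend the segment from `y₁` through `y₀` by
`δ / 2` beyond `y₀`; the endpoint `z` is still in `U`. Since `g z ≥ 0`, concavity on `[z, y₁]`
bounds `g y₁` by `g y₀ (1 + 2 |y₁ - y₀| / δ) ≤ g y₀ (1 + 2 D / δ)`, and raising to the power
`n - 1` gives `i ≤ A (1 + 2 D / δ) ^ (n - 1)`.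
-/

theorem ConcaveOn.sub_mul_le_sub_mul_of_nonneg {s : Set ℝ} {g : ℝ → ℝ} (hg : ConcaveOn ℝ s g)
    {a x b : ℝ} (ha : a ∈ s) (hb : b ∈ s) (hax : a < x) (hxb : x ≤ b) (hga : 0 ≤ g a) :
    (x - a) * g b ≤ (b - a) * g x := by
  have hab : 0 < b - a := by linarith
  have hcomb : ((b - x) / (b - a)) • a + ((x - a) / (b - a)) • b = x := by
    simp only [smul_eq_mul]; field_simp; ring
  have key := hg.2 ha hb (div_nonneg (sub_nonneg.2 hxb) hab.le)
    (div_nonneg (sub_nonneg.2 hax.le) hab.le) (by field_simp; ring)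
  rw [hcomb, smul_eq_mul, smul_eq_mul, div_mul_eq_mul_div, div_mul_eq_mul_div, ← add_div,
    div_le_iff₀ hab] at key
  linarith [mul_nonneg (sub_nonneg.2 hxb) hga]

theorem le_mul_one_add_dist_div_rpow_of_concaveOn_line {E : Type*} [NormedAddCommGroup E]
    [NormedSpace ℝ E] {U : Set E} {f : E → ℝ} {p ρ : ℝ} {y₀ y₁ : E} (hp : 0 < p) (hρ : 0 < ρ)
    (hf : ∀ x ∈ U, 0 ≤ f x)
    (hconc : ConcaveOn ℝ {t : ℝ | y₀ + t • (y₁ - y₀) ∈ U}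
      (fun t => f (y₀ + t • (y₁ - y₀)) ^ (1 / p)))
    (hball : closedBall y₀ ρ ⊆ U) (hy₁ : y₁ ∈ U) :
    f y₁ ≤ f y₀ * (1 + dist y₁ y₀ / ρ) ^ p := by
  rcases eq_or_ne y₁ y₀ with rfl | hne
  · simp
  have hw : 0 < ‖y₁ - y₀‖ := norm_pos_iff.2 (sub_ne_zero.2 hne)
  set s := ρ / ‖y₁ - y₀‖ with hs_def
  have hs : 0 < s := div_pos hρ hw
  have hz : y₀ + (-s) • (y₁ - y₀) ∈ U := hball <| by
    rw [mem_closedBall, dist_eq_norm, add_sub_cancel_left, norm_smul, norm_neg,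
      Real.norm_of_nonneg hs.le, hs_def, div_mul_cancel₀ _ hw.ne']
  have hy₁' : y₀ + (1 : ℝ) • (y₁ - y₀) ∈ U := by rwa [one_smul, add_sub_cancel]
  have hline := hconc.sub_mul_le_sub_mul_of_nonneg hz hy₁' (neg_neg_of_pos hs) zero_le_one
    (Real.rpow_nonneg (hf _ hz) _)
  simp only [one_smul, zero_smul, add_zero, add_sub_cancel, zero_add, sub_neg_eq_add] at hline
  have hroot : f y₁ ^ p⁻¹ ≤ f y₀ ^ p⁻¹ * (1 + dist y₁ y₀ / ρ) := by
    have hratio : (1 + s) / s = 1 + dist y₁ y₀ / ρ := by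
      rw [dist_eq_norm, hs_def]; field_simp; ring
    rw [← hratio, ← one_div, mul_div_assoc', le_div_iff₀ hs, mul_comm _ s, mul_comm _ (1 + s)]
    exact hline
  have hfy₀ : 0 ≤ f y₀ := hf _ (hball (mem_closedBall_self hρ.le))
  calc f y₁ ≤ (f y₀ ^ p⁻¹ * (1 + dist y₁ y₀ / ρ)) ^ p :=
        (Real.rpow_inv_le_iff_of_pos (hf _ hy₁) (by positivity) hp).1 hroot
    _ = f y₀ * (1 + dist y₁ y₀ / ρ) ^ p := by
        rw [Real.mul_rpow (by positivity) (by positivity), Real.rpow_inv_rpow hfy₀ hp.ne']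

theorem stmt_9_general (n : ℕ) (hn : 2 ≤ n) (A r δ D : ℝ) (hδ : 0 < δ) :
    ∃ B : ℝ, ∀ (U K : Set (ℝ × ℝ)) (f : ℝ × ℝ → ℝ) (x₀ x₁ : ℝ × ℝ) (i : ℝ),
      IsOpen U → Convex ℝ U → IsCompact K → K ⊆ U → Metric.diam K ≤ D →
      (∀ x ∈ K, ∀ y ∉ U, δ ≤ dist x y) →
      Continuous f → (∀ x, 0 < f x) →
      (∀ v w : ℝ × ℝ,
        ConcaveOn ℝ {t : ℝ | v + t • w ∈ U} (fun t => f (v + t • w) ^ ((1:ℝ) / (n - 1)))) →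
      ball x₀ r ⊆ K → ball x₁ r ⊆ K →
      0 < volume {x ∈ ball x₀ r | f x ≤ A} →
      0 < volume {x ∈ ball x₁ r | i ≤ f x} →
      i ≤ B := by
  refine ⟨A * (1 + 2 * D / δ) ^ ((n : ℝ) - 1), ?_⟩
  intro U K f x₀ x₁ i _ _ hK hKU hdiam hdist _ hfpos hconc hb₀ hb₁ hvol₀ hvol₁
  obtain ⟨y₀, hy₀, hfy₀⟩ := nonempty_of_measure_ne_zero hvol₀.ne'
  obtain ⟨y₁, hy₁, hfy₁⟩ := nonempty_of_measure_ne_zero hvol₁.ne'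
  have hp : 0 < (n : ℝ) - 1 := by
    have : (2 : ℝ) ≤ n := by exact_mod_cast hn
    linarith
  have hball : closedBall y₀ (δ / 2) ⊆ U := fun z hz => by
    by_contra hzU
    have := hdist y₀ (hb₀ hy₀) z hzU
    rw [mem_closedBall, dist_comm] at hz
    linarith
  have hdist₁₀ : dist y₁ y₀ ≤ D :=
    (dist_le_diam_of_mem hK.isBounded (hb₁ hy₁) (hb₀ hy₀)).trans hdiam
  calc i ≤ f y₁ := hfy₁
    _ ≤ f y₀ * (1 + dist y₁ y₀ / (δ / 2)) ^ ((n : ℝ) - 1) :=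
        le_mul_one_add_dist_div_rpow_of_concaveOn_line hp (half_pos hδ) (fun x _ => (hfpos x).le)
          (hconc y₀ (y₁ - y₀)) hball (hKU (hb₁ hy₁))
    _ ≤ A * (1 + 2 * D / δ) ^ ((n : ℝ) - 1) := by
        rw [div_div_eq_mul_div, mul_comm _ 2]
        gcongr
        exact (hfpos y₀).le.trans hfy₀

/-- quantitative L∞ bound for densities whose restrictions to all lines have
concave `(1/(n-1))`-th power. If a continuous positive `f : ℝ² → (0,∞)`, whose restriction to
every line has concave `(1/(n-1))`-th power on the (convex) portion of the line inside an open
convex set `U`, satisfies `f ≤ A` on a set of positive measure in a ball `B_r(x₀)` and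
`f ≥ i` on a set of positive measure in a ball `B_r(x₁)`, with both balls inside a compact
`K ⊆ U` with `dist(K,∂U) ≥ δ` and `diam K ≤ D`, then `i ≤ B` for a constant `B` depending
only on `A, r, δ, n, D`. -/
theorem stmt_9 (n : ℕ) (hn : 2 ≤ n) (A r δ D : ℝ) (hA : 0 < A) (hr : 0 < r) (hδ : 0 < δ)
    (hD : 0 < D) :
    ∃ B : ℝ, ∀ (U K : Set (ℝ × ℝ)) (f : ℝ × ℝ → ℝ) (x₀ x₁ : ℝ × ℝ) (i : ℝ),
      IsOpen U → Convex ℝ U → IsCompact K → K ⊆ U → Metric.diam K ≤ D →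
      (∀ x ∈ K, ∀ y ∉ U, δ ≤ dist x y) →
      Continuous f → (∀ x, 0 < f x) →
      (∀ v w : ℝ × ℝ,
        ConcaveOn ℝ {t : ℝ | v + t • w ∈ U} (fun t => f (v + t • w) ^ ((1:ℝ) / (n - 1)))) →
      ball x₀ r ⊆ K → ball x₁ r ⊆ K →
      0 < volume {x ∈ ball x₀ r | f x ≤ A} →
      0 < volume {x ∈ ball x₁ r | i ≤ f x} →
      i ≤ B :=
  stmt_9_general n hn A r δ D hδ
end

section
/- Let μ be a locally finite Borel measure on ℝ² such that for every closed half-plane H (in every direction) the restriction μ|H splits as a product n_H × λ¹ in coordinates adapted to H, where λ¹ is one-dimensional Lebesgue measure. Then μ = c·λ² for some constant c ≥ 0. -/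
open MeasureTheory Real ENNReal

/-- Rotation of the plane by angle `θ`. -/
noncomputable def planeRot (θ : ℝ) : ℝ × ℝ → ℝ × ℝ :=
  fun p => (p.1 * Real.cos θ - p.2 * Real.sin θ, p.1 * Real.sin θ + p.2 * Real.cos θ)

/-!
Rotating by `0`, `π` and `π/2` turns the hypothesis into three rectangle formulas for `μ`:
a horizontal Lebesgue factor on the upper and on the lower half-plane, and a vertical one on
the right half-plane. The first two glue to `μ (s ×ˢ t) = λ(s) · n(t)` for all rectangles.
Evaluating on `[0,1] × t`, which lies in the right half-plane, gives `n(t) = c · λ(t)`, and a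
measure that agrees with `c • λ²` on rectangles is `c • λ²` as soon as `c < ∞`, which local
finiteness guarantees.
-/

open Set Pointwise

namespace MeasureTheory.Measure

variable {α β : Type*} [MeasurableSpace α] [MeasurableSpace β]

/-- For `ν` not s-finite, `μ.prod ν` is a `bind` along a kernel that need not be measurable, in
which case it is `0`; the witness `ν'` is then `0` rather than `ν`. -/
theorem exists_prod_apply_prod_eq_mul (μ : Measure α) (ν : Measure β) :
    ∃ ν' : Measure β, ∀ ⦃s t⦄, MeasurableSet s → MeasurableSet t →
      μ.prod ν (s ×ˢ t) = μ s * ν' t := by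
  classical
  by_cases hκ : AEMeasurable (fun x => map (Prod.mk x) ν) μ
  · refine ⟨ν, fun s t hs ht => ?_⟩
    rw [prod_def, bind_apply (hs.prod ht) hκ]
    simp_rw [map_apply measurable_prodMk_left (hs.prod ht), mk_preimage_prod_right_eq_if,
      measure_if]
    rw [lintegral_indicator hs, setLIntegral_const, mul_comm]
  · refine ⟨0, fun s t _ _ => ?_⟩
    rw [prod_def, bind, map_of_not_aemeasurable hκ]
    simp

theorem exists_apply_prod_eq_mul_of_restrict_eq {ρ : Measure (α × β)} {μ : Measure α}
    {ν : Measure β} {T : Set β} (h : ρ.restrict (univ ×ˢ T) = (μ.prod ν).restrict (univ ×ˢ T)) :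
    ∃ ν' : Measure β, ∀ ⦃s t⦄, MeasurableSet s → MeasurableSet t → t ⊆ T →
      ρ (s ×ˢ t) = μ s * ν' t := by
  obtain ⟨ν', hν'⟩ := exists_prod_apply_prod_eq_mul μ ν
  refine ⟨ν', fun s t hs ht htT => ?_⟩
  have hsub : s ×ˢ t ⊆ univ ×ˢ T := Set.prod_mono (subset_univ s) htT
  rw [← hν' hs ht, ← restrict_eq_self ρ hsub, h, restrict_eq_self _ hsub]

theorem eq_smul_prod_of_apply_prod_eq {μ : Measure α} {ν : Measure β} [SigmaFinite μ]
    [SigmaFinite ν] {ρ : Measure (α × β)} {c : ℝ≥0∞} (hc : c ≠ ∞)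
    (h : ∀ ⦃s t⦄, MeasurableSet s → MeasurableSet t → ρ (s ×ˢ t) = c * (μ s * ν t)) :
    ρ = c • μ.prod ν := by
  lift c to NNReal using hc
  rw [← ENNReal.smul_def, ← prod_smul_left]
  refine (prod_eq fun s t hs ht => ?_).symm
  rw [h hs ht, smul_apply, ENNReal.smul_def, smul_eq_mul, mul_assoc]

end MeasureTheory.Measure

open Measure

theorem measurable_planeRot (θ : ℝ) : Measurable (planeRot θ) := by
  unfold planeRot
  fun_prop

theorem planeRot_zero : planeRot 0 = id := by
  funext p
  simp [planeRot]

theorem preimage_planeRot_pi_div_two_prod (s t : Set ℝ) :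
    planeRot (π / 2) ⁻¹' (s ×ˢ t) = t ×ˢ (-s) := by
  ext p
  simp [planeRot, and_comm]

theorem preimage_planeRot_pi_prod (s t : Set ℝ) : planeRot π ⁻¹' (s ×ˢ t) = (-s) ×ˢ (-t) := by
  ext p
  simp [planeRot]

def SplitsAfterRotation (μ : Measure (ℝ × ℝ)) (θ : ℝ) : Prop :=
  ∃ n : Measure ℝ, (map (planeRot θ) μ).restrict (univ ×ˢ Ici (0 : ℝ))
    = ((volume : Measure ℝ).prod n).restrict (univ ×ˢ Ici (0 : ℝ))

namespace SplitsAfterRotation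

variable {μ : Measure (ℝ × ℝ)}

theorem exists_apply_prod_eq_volume_mul_of_subset_Ici (h : SplitsAfterRotation μ 0) :
    ∃ n : Measure ℝ, ∀ ⦃s t⦄, MeasurableSet s → MeasurableSet t → t ⊆ Ici 0 →
      μ (s ×ˢ t) = volume s * n t := by
  obtain ⟨n, hn⟩ := h
  rw [planeRot_zero, map_id] at hn
  exact exists_apply_prod_eq_mul_of_restrict_eq hn

theorem exists_apply_prod_eq_volume_mul_of_subset_Iic (h : SplitsAfterRotation μ π) :
    ∃ n : Measure ℝ, ∀ ⦃s t⦄, MeasurableSet s → MeasurableSet t → t ⊆ Iic 0 →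
      μ (s ×ˢ t) = volume s * n t := by
  obtain ⟨n, hn⟩ := h
  obtain ⟨n', hn'⟩ := exists_apply_prod_eq_mul_of_restrict_eq hn
  refine ⟨map Neg.neg n', fun s t hs ht htT => ?_⟩
  have hrot := hn' hs.neg ht.neg (by simpa using neg_subset_neg.mpr htT)
  rw [map_apply (measurable_planeRot π) (hs.neg.prod ht.neg), preimage_planeRot_pi_prod,
    neg_neg, neg_neg, measure_neg] at hrot
  rwa [map_apply measurable_neg ht]

theorem exists_apply_prod_eq_mul_volume_of_subset_Ici (h : SplitsAfterRotation μ (π / 2)) :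
    ∃ n : Measure ℝ, ∀ ⦃s t⦄, MeasurableSet s → MeasurableSet t → s ⊆ Ici 0 →
      μ (s ×ˢ t) = n s * volume t := by
  obtain ⟨n, hn⟩ := h
  obtain ⟨n', hn'⟩ := exists_apply_prod_eq_mul_of_restrict_eq hn
  refine ⟨n', fun s t hs ht hsT => ?_⟩
  have hrot := hn' ht.neg hs hsT
  rwa [map_apply (measurable_planeRot _) (ht.neg.prod hs), preimage_planeRot_pi_div_two_prod,
    neg_neg, measure_neg, mul_comm] at hrot

theorem exists_apply_prod_eq_volume_mul (h₀ : SplitsAfterRotation μ 0)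
    (hπ : SplitsAfterRotation μ π) :
    ∃ n : Measure ℝ, ∀ ⦃s t⦄, MeasurableSet s → MeasurableSet t →
      μ (s ×ˢ t) = volume s * n t := by
  obtain ⟨n₁, hn₁⟩ := h₀.exists_apply_prod_eq_volume_mul_of_subset_Ici
  obtain ⟨n₂, hn₂⟩ := hπ.exists_apply_prod_eq_volume_mul_of_subset_Iic
  refine ⟨n₁.restrict (Ici 0) + n₂.restrict (Iio 0), fun s t hs ht => ?_⟩
  have hdisj : Disjoint (s ×ˢ (t ∩ Ici 0)) (s ×ˢ (t ∩ Iio 0)) :=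
    disjoint_prod.mpr <| .inr <|
      (Iio_disjoint_Ici le_rfl).symm.mono inter_subset_right inter_subset_right
  have hμ : μ (s ×ˢ t) = μ (s ×ˢ (t ∩ Ici 0)) + μ (s ×ˢ (t ∩ Iio 0)) := by
    rw [← measure_union hdisj (hs.prod (ht.inter measurableSet_Iio)), ← prod_union,
      ← inter_union_distrib_left, Ici_union_Iio, inter_univ]
  rw [hμ, hn₁ hs (ht.inter measurableSet_Ici) inter_subset_right,
    hn₂ hs (ht.inter measurableSet_Iio) (inter_subset_right.trans Iio_subset_Iic_self),
    Measure.add_apply, restrict_apply ht, restrict_apply ht, mul_add]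

end SplitsAfterRotation

/-- Let `μ` be a locally finite Borel measure on `ℝ²` such that, for every
direction, the restriction of `μ` to the corresponding closed half-plane splits as a product
`n_H × λ¹` in adapted coordinates (here: after rotating by any angle `θ`, the restriction to
the upper half-plane `ℝ × [0,∞)` is `λ¹ × n_θ`, with Lebesgue measure in the direction of the
boundary line). Then `μ = c·λ²` for some constant `c ≥ 0`. -/
theorem stmt_11 (μ : Measure (ℝ × ℝ)) [IsLocallyFiniteMeasure μ]
    (hsplit : ∀ θ : ℝ, ∃ n : Measure ℝ,
      (Measure.map (planeRot θ) μ).restrict (Set.univ ×ˢ Set.Ici (0:ℝ))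
        = ((volume : Measure ℝ).prod n).restrict (Set.univ ×ˢ Set.Ici (0:ℝ))) :
    ∃ c : ℝ≥0∞, μ = c • (volume : Measure (ℝ × ℝ)) := by
  obtain ⟨n, hn⟩ := SplitsAfterRotation.exists_apply_prod_eq_volume_mul (hsplit 0) (hsplit π)
  obtain ⟨m, hm⟩ :=
    SplitsAfterRotation.exists_apply_prod_eq_mul_volume_of_subset_Ici (hsplit (π / 2))
  have hunit : volume (Icc (0 : ℝ) 1) = 1 := by simp [Real.volume_Icc]
  have hstrip : ∀ ⦃t⦄, MeasurableSet t → μ (Icc 0 1 ×ˢ t) = m (Icc 0 1) * volume t :=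
    fun t ht => hm measurableSet_Icc ht fun _ hx => hx.1
  have hn_eq : ∀ ⦃t⦄, MeasurableSet t → n t = m (Icc 0 1) * volume t := fun t ht => by
    rw [← hstrip ht, hn measurableSet_Icc ht, hunit, one_mul]
  have hc : m (Icc 0 1) ≠ ∞ := by
    rw [← mul_one (m _), ← hunit, ← hstrip measurableSet_Icc]
    exact (isCompact_Icc.prod isCompact_Icc).measure_lt_top.ne
  refine ⟨m (Icc 0 1), eq_smul_prod_of_apply_prod_eq hc fun s t hs ht => ?_⟩
  rw [hn hs ht, hn_eq ht, mul_left_comm]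
end

section
/- Let μ be a locally finite Borel measure on ℝ² such that μ restricted to the left half-plane (−∞,0) × ℝ equals 𝔫 × λ¹ for some measure 𝔫 on (−∞,0), μ restricted to the upper half-plane ℝ × (0,∞) equals λ¹ × 𝔫' for some measure 𝔫' on (0,∞), and μ restricted to the lower half-plane ℝ × (−∞,0) equals λ¹ × 𝔫'' for some measure 𝔫'' on (−∞,0). Then μ = c λ² on ℝ² \ ([0,∞) × {0}) for some constant c ≥ 0. -/
open MeasureTheory ENNReal


lemma prod_apply_or (ν : Measure ℝ) :
    (volume : Measure ℝ).prod ν = 0 ∨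
    ∀ E : Set (ℝ × ℝ), MeasurableSet E →
      (volume : Measure ℝ).prod ν E = ∫⁻ x, ν (Prod.mk x ⁻¹' E) ∂(volume : Measure ℝ) := by
  by_cases h : AEMeasurable (fun x : ℝ => ν.map (Prod.mk x)) (volume : Measure ℝ)
  · right
    intro E hE
    rw [MeasureTheory.Measure.prod_def, Measure.bind, Measure.join_apply hE,
      lintegral_map' (Measure.measurable_coe hE).aemeasurable h]
    exact lintegral_congr fun x => Measure.map_apply measurable_prodMk_left hE
  · left
    rw [MeasureTheory.Measure.prod_def, Measure.bind, Measure.map_of_not_aemeasurable h,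
      Measure.join_zero]

lemma my_smul_prod (c : ℝ≥0∞) (m ν : Measure ℝ) [SFinite ν] :
    (c • m).prod ν = c • (m.prod ν) := by
  ext s hs
  rw [Measure.prod_apply hs, Measure.smul_apply, Measure.prod_apply hs,
    lintegral_smul_measure, smul_eq_mul]

lemma my_restrict_prod (m : Measure ℝ) (s : Set ℝ) (hs : MeasurableSet s) :
    (m.prod (volume : Measure ℝ)).restrict (s ×ˢ Set.univ) = (m.restrict s).prod volume := by
  classical
  ext E hE
  rw [Measure.restrict_apply hE,
    Measure.prod_apply (hE.inter (hs.prod MeasurableSet.univ)), Measure.prod_apply hE,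
    ← lintegral_indicator hs]
  refine lintegral_congr fun x => ?_
  by_cases hx : x ∈ s
  · simp [Set.preimage_inter, Set.mk_preimage_prod_right_eq_if, hx,
      Set.indicator_of_mem hx]
  · simp [Set.preimage_inter, Set.mk_preimage_prod_right_eq_if, hx,
      Set.indicator_of_notMem hx]

/-- key step: a horizontal strip where `μ` is `volume.prod ν` and which is pinned to the
constant `c` by the left overlap must be `c • volume` there. -/
lemma key_strip (μ : Measure (ℝ × ℝ)) (ν : Measure ℝ) (c : ℝ≥0∞)
    (T B₀ : Set ℝ) (hT : MeasurableSet T) (hB₀ : MeasurableSet B₀) (hB₀T : B₀ ⊆ T)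
    (hB₀vol : volume B₀ = 1)
    (hμT : μ.restrict (Set.univ ×ˢ T) = ((volume : Measure ℝ).prod ν).restrict (Set.univ ×ˢ T))
    (hover : ∀ B : Set ℝ, MeasurableSet B → μ (Set.Ioo (-1 : ℝ) 0 ×ˢ B) = c * volume B) :
    μ.restrict (Set.univ ×ˢ T) = (c • (volume : Measure (ℝ × ℝ))).restrict (Set.univ ×ˢ T) := by
  have hIoo : volume (Set.Ioo (-1 : ℝ) 0) = 1 := by
    rw [Real.volume_Ioo]; norm_num
  have hres : ∀ B : Set ℝ, MeasurableSet B → B ⊆ T →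
      μ (Set.Ioo (-1 : ℝ) 0 ×ˢ B) = ((volume : Measure ℝ).prod ν) (Set.Ioo (-1 : ℝ) 0 ×ˢ B) := by
    intro B hB hBT
    have hE : MeasurableSet (Set.Ioo (-1 : ℝ) 0 ×ˢ B) := measurableSet_Ioo.prod hB
    have hsub : Set.Ioo (-1 : ℝ) 0 ×ˢ B ⊆ Set.univ ×ˢ T :=
      Set.prod_mono (Set.subset_univ _) hBT
    calc μ (Set.Ioo (-1 : ℝ) 0 ×ˢ B)
        = μ.restrict (Set.univ ×ˢ T) (Set.Ioo (-1 : ℝ) 0 ×ˢ B) := by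
          rw [Measure.restrict_apply hE, Set.inter_eq_left.mpr hsub]
      _ = ((volume : Measure ℝ).prod ν) (Set.Ioo (-1 : ℝ) 0 ×ˢ B) := by
          rw [hμT, Measure.restrict_apply hE, Set.inter_eq_left.mpr hsub]
  rcases prod_apply_or ν with h0 | F
  · have hz : μ.restrict (Set.univ ×ˢ T) = 0 := by rw [hμT, h0, Measure.restrict_zero]
    have hc : c = 0 := by
      have h1 : μ (Set.Ioo (-1 : ℝ) 0 ×ˢ B₀) = 0 := by
        rw [hres B₀ hB₀ hB₀T, h0]; rfl
      have h2 := hover B₀ hB₀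
      rw [h1, hB₀vol, mul_one] at h2
      exact h2.symm
    rw [hz, hc, zero_smul, Measure.restrict_zero]
  · have hrect : ∀ (A B : Set ℝ), MeasurableSet A → MeasurableSet B →
        ((volume : Measure ℝ).prod ν) (A ×ˢ B) = volume A * ν B := by
      intro A B hA hB
      classical
      rw [F _ (hA.prod hB)]
      simp_rw [Set.mk_preimage_prod_right_eq_if, measure_if]
      rw [lintegral_indicator hA, lintegral_const, Measure.restrict_apply_univ, mul_comm]
    have hν : ∀ B : Set ℝ, MeasurableSet B → B ⊆ T → ν B = c * volume B := by
      intro B hB hBT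
      have e1 := hover B hB
      have e2 := hres B hB hBT
      rw [hrect _ _ measurableSet_Ioo hB, hIoo, one_mul] at e2
      rw [← e2, e1]
    ext E hE
    have hEm : MeasurableSet (E ∩ Set.univ ×ˢ T) := hE.inter (MeasurableSet.univ.prod hT)
    rw [hμT, Measure.restrict_apply hE, Measure.restrict_apply hE, F _ hEm]
    have hsl : ∀ x : ℝ, ν (Prod.mk x ⁻¹' (E ∩ Set.univ ×ˢ T))
        = c * volume (Prod.mk x ⁻¹' (E ∩ Set.univ ×ˢ T)) := by
      intro x
      exact hν _ (measurable_prodMk_left hEm) (fun y hy => hy.2.2)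
    simp_rw [hsl]
    rw [lintegral_const_mul c (measurable_measure_prodMk_left hEm),
      ← Measure.prod_apply hEm, Measure.smul_apply, smul_eq_mul, ← Measure.volume_eq_prod]

/-- Let `μ` be a locally finite Borel measure on `ℝ²` whose restriction to the
left half-plane `(−∞,0) × ℝ` is `𝔫 × λ¹` (Lebesgue in the second coordinate), whose restriction
to the upper half-plane `ℝ × (0,∞)` is `λ¹ × 𝔫'` (Lebesgue in the first coordinate), and
similarly for the lower half-plane. Then `μ = c λ²` on `ℝ² \ ([0,∞) × {0})` for some `c ≥ 0`. -/
theorem stmt_12 (μ : Measure (ℝ × ℝ)) [IsLocallyFiniteMeasure μ]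
    (hleft : ∃ n : Measure ℝ,
      μ.restrict (Set.Iio (0:ℝ) ×ˢ Set.univ)
        = (n.prod (volume : Measure ℝ)).restrict (Set.Iio (0:ℝ) ×ˢ Set.univ))
    (hupper : ∃ n' : Measure ℝ,
      μ.restrict (Set.univ ×ˢ Set.Ioi (0:ℝ))
        = ((volume : Measure ℝ).prod n').restrict (Set.univ ×ˢ Set.Ioi (0:ℝ)))
    (hlower : ∃ n'' : Measure ℝ,
      μ.restrict (Set.univ ×ˢ Set.Iio (0:ℝ))
        = ((volume : Measure ℝ).prod n'').restrict (Set.univ ×ˢ Set.Iio (0:ℝ))) :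
    ∃ c : ℝ≥0∞,
      μ.restrict (Set.Ici (0:ℝ) ×ˢ ({0} : Set ℝ))ᶜ
        = (c • (volume : Measure (ℝ × ℝ))).restrict (Set.Ici (0:ℝ) ×ˢ ({0} : Set ℝ))ᶜ := by
  obtain ⟨n, hleft⟩ := hleft
  obtain ⟨n', hupper⟩ := hupper
  obtain ⟨n'', hlower⟩ := hlower
  set L : Set (ℝ × ℝ) := Set.Iio (0:ℝ) ×ˢ Set.univ with hLdef
  set c : ℝ≥0∞ := n (Set.Ioo (-1) 0) with hcdef
  -- values of μ on rectangles inside the left half-plane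
  have hμL : ∀ (A B : Set ℝ), MeasurableSet A → A ⊆ Set.Iio 0 → MeasurableSet B →
      μ (A ×ˢ B) = n A * volume B := by
    intro A B hA hA' hB
    have hE : MeasurableSet (A ×ˢ B) := hA.prod hB
    have hsub : A ×ˢ B ⊆ L := Set.prod_mono hA' (Set.subset_univ _)
    calc μ (A ×ˢ B) = μ.restrict L (A ×ˢ B) := by
          rw [Measure.restrict_apply hE, Set.inter_eq_left.mpr hsub]
      _ = (n.prod volume) (A ×ˢ B) := by
          rw [hleft, Measure.restrict_apply hE, Set.inter_eq_left.mpr hsub]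
      _ = n A * volume B := Measure.prod_prod _ _
  have hover : ∀ B : Set ℝ, MeasurableSet B →
      μ (Set.Ioo (-1 : ℝ) 0 ×ˢ B) = c * volume B := by
    intro B hB
    exact hμL _ _ measurableSet_Ioo (fun x hx => hx.2) hB
  have hvol01 : volume (Set.Ioo (0:ℝ) 1) = 1 := by rw [Real.volume_Ioo]; norm_num
  have hvolm10 : volume (Set.Ioo (-1:ℝ) 0) = 1 := by rw [Real.volume_Ioo]; norm_num
  have hU := key_strip μ n' c (Set.Ioi 0) (Set.Ioo 0 1) measurableSet_Ioi measurableSet_Ioo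
    (fun x hx => hx.1) hvol01 hupper hover
  have hD := key_strip μ n'' c (Set.Iio 0) (Set.Ioo (-1) 0) measurableSet_Iio measurableSet_Ioo
    (fun x hx => hx.2) hvolm10 hlower hover
  -- values of n on measurable subsets of Iio 0
  have hnval : ∀ A : Set ℝ, MeasurableSet A → A ⊆ Set.Iio 0 → n A = c * volume A := by
    intro A hA hA'
    have e1 := hμL A (Set.Ioo 0 1) hA hA' measurableSet_Ioo
    rw [hvol01, mul_one] at e1
    have hE : MeasurableSet (A ×ˢ Set.Ioo (0:ℝ) 1) := hA.prod measurableSet_Ioo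
    have hsub : A ×ˢ Set.Ioo (0:ℝ) 1 ⊆ Set.univ ×ˢ Set.Ioi (0:ℝ) :=
      Set.prod_mono (Set.subset_univ _) (fun y hy => hy.1)
    have e2 : μ (A ×ˢ Set.Ioo (0:ℝ) 1) = c * volume A := by
      calc μ (A ×ˢ Set.Ioo (0:ℝ) 1)
          = μ.restrict (Set.univ ×ˢ Set.Ioi (0:ℝ)) (A ×ˢ Set.Ioo (0:ℝ) 1) := by
            rw [Measure.restrict_apply hE, Set.inter_eq_left.mpr hsub]
        _ = (c • (volume : Measure (ℝ × ℝ))) (A ×ˢ Set.Ioo (0:ℝ) 1) := by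
            rw [hU, Measure.restrict_apply hE, Set.inter_eq_left.mpr hsub]
        _ = c * volume A := by
            rw [Measure.smul_apply, smul_eq_mul, Measure.volume_eq_prod,
              Measure.prod_prod, hvol01, mul_one]
    rw [← e1, e2]
  have hnres : n.restrict (Set.Iio 0) = c • ((volume : Measure ℝ).restrict (Set.Iio 0)) := by
    ext A hA
    rw [Measure.restrict_apply hA,
      hnval _ (hA.inter measurableSet_Iio) Set.inter_subset_right,
      Measure.smul_apply, Measure.restrict_apply hA, smul_eq_mul]
  have hL : μ.restrict L = (c • (volume : Measure (ℝ × ℝ))).restrict L := by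
    rw [hleft, hLdef, my_restrict_prod n _ measurableSet_Iio, hnres, my_smul_prod,
      ← my_restrict_prod volume _ measurableSet_Iio, ← Measure.volume_eq_prod,
      ← Measure.restrict_smul]
  have hset : (Set.Ici (0:ℝ) ×ˢ ({0} : Set ℝ))ᶜ
      = L ∪ (Set.univ ×ˢ Set.Ioi (0:ℝ) ∪ Set.univ ×ˢ Set.Iio (0:ℝ)) := by
    ext ⟨x, y⟩
    simp only [Set.mem_compl_iff, Set.mem_prod, Set.mem_union, Set.mem_Ici, Set.mem_Ioi,
      Set.mem_Iio, Set.mem_singleton_iff, Set.mem_univ, true_and, and_true, not_and_or,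
      not_le, hLdef]
    constructor
    · rintro (h | h)
      · exact Or.inl h
      · rcases Ne.lt_or_gt h with h' | h'
        · exact Or.inr (Or.inr h')
        · exact Or.inr (Or.inl h')
    · rintro (h | h | h)
      · exact Or.inl h
      · exact Or.inr h.ne'
      · exact Or.inr h.ne
  refine ⟨c, ?_⟩
  rw [hset, Measure.restrict_union_congr, Measure.restrict_union_congr]
  exact ⟨hL, hU, hD⟩
end
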